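/- arXiv:1603.04632 — 2 statements merged into one kernel-verified Lean document; each statement's English description precedes it below -/
import Mathlib

section
/- Let N be a level-1 phylogenetic network on a finite leaf set X and let Y ⊆ X with |Y| ≥ 2. Then there exists a unique interior vertex v of N such that Y is contained in the offspring set F(v) of v, but Y is not contained in F(v') for any child v' of v. Moreover, there exist two distinct elements x, y ∈ Y such that v equals the corresponding unique vertex for the pair {x,y}. -/
/-- A rooted phylogenetic network on leaf set `X`: a rooted DAG whose leaves are
identified with `X`, with no vertex of indegree one and outdegree one. -/
structure PhyloNetwork (X : Type) [Fintype X] [DecidableEq X] where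
  V : Type
  [instFin : Fintype V]
  [instDec : DecidableEq V]
  adj : V → V → Prop
  root : V
  leaf : X → V
  acyclic : ∀ v : V, ¬ Relation.TransGen adj v v
  root_no_in : ∀ u : V, ¬ adj u root
  connected : ∀ v : V, Relation.ReflTransGen adj root v
  leaf_inj : Function.Injective leaf
  leaf_no_out : ∀ (x : X) (w : V), ¬ adj (leaf x) w
  leaves_only : ∀ v : V, (∀ w : V, ¬ adj v w) → v = root ∨ ∃ x, leaf x = v
  no_inout_one : ∀ v : V, ¬ ((∃! u : V, adj u v) ∧ (∃! w : V, adj v w))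

namespace PhyloNetwork

variable {X : Type} [Fintype X] [DecidableEq X]

/-- Reachability by a directed path. -/
def reaches (N : PhyloNetwork X) : N.V → N.V → Prop := Relation.ReflTransGen N.adj

/-- The offspring set of a vertex: all leaves below it. -/
def F (N : PhyloNetwork X) (v : N.V) : Set X := {x | N.reaches v (N.leaf x)}

/-- `v` is a leaf vertex. -/
def IsLeafV (N : PhyloNetwork X) (v : N.V) : Prop := ∃ x, N.leaf x = v

/-- `v` is a lowest common ancestor of the set `Y` of leaves. -/
def IsLca (N : PhyloNetwork X) (Y : Finset X) (v : N.V) : Prop :=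
  (∀ x ∈ Y, x ∈ N.F v) ∧ ∀ w : N.V, N.adj v w → ¬ (∀ x ∈ Y, x ∈ N.F w)

/-- A cycle of a (level-1) network: two edge-disjoint, internally vertex-disjoint
directed paths from a root `r` to a hybrid `h`, with at least 3 vertices in total.
`side1` and `side2` list the internal vertices of the two sides in order. -/
structure NCycle (N : PhyloNetwork X) where
  r : N.V
  h : N.V
  side1 : List N.V
  side2 : List N.V
  chain1 : List.Chain N.adj r (side1 ++ [h])
  chain2 : List.Chain N.adj r (side2 ++ [h])
  ne : r ≠ h
  nodup1 : (r :: (side1 ++ [h])).Nodup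
  nodup2 : (r :: (side2 ++ [h])).Nodup
  disj : ∀ v ∈ side1, v ∉ side2
  nontriv : side1 ≠ [] ∨ side2 ≠ []

/-- The vertex set of a cycle. -/
def NCycle.verts {N : PhyloNetwork X} (C : NCycle N) : Set N.V :=
  {C.r, C.h} ∪ {v | v ∈ C.side1} ∪ {v | v ∈ C.side2}

/-- A level-1 network: every vertex belongs to at most one cycle. -/
def IsLevelOne (N : PhyloNetwork X) : Prop :=
  ∀ C C' : NCycle N, ∀ v : N.V, v ∈ C.verts → v ∈ C'.verts → C.verts = C'.verts

/-- `R(C)`: the leaves below the root of the cycle `C`. -/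
def NCycle.RC {N : PhyloNetwork X} (C : NCycle N) : Set X := N.F C.r

/-- `H(C)`: the leaves below the hybrid of the cycle `C`. -/
def NCycle.HC {N : PhyloNetwork X} (C : NCycle N) : Set X := N.F C.h

/-- `v` is the last ancestor `v_C(x)` of the leaf `x` lying in the cycle `C`. -/
def NCycle.LastAnc {N : PhyloNetwork X} (C : NCycle N) (v : N.V) (x : X) : Prop :=
  v ∈ C.verts ∧ N.reaches v (N.leaf x) ∧
    ∀ w ∈ C.verts, N.reaches w (N.leaf x) → N.reaches w v

end PhyloNetwork

/-- A symbolic 3-dissimilarity on `X` with values in `M ∪ {⊙}` (`⊙` = `none`):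
singletons get `⊙`, sets of size 2 or 3 get values in `M`. -/
structure SymbolicDissim3 (X M : Type) [DecidableEq X] where
  val : Finset X → Option M
  singleton_none : ∀ A : Finset X, A.card = 1 → val A = none
  pair_some : ∀ A : Finset X, A.card = 2 ∨ A.card = 3 → val A ≠ none

/-- The labelled network `(N,t)` represents `δ`: for every `Y ⊆ X` of size 2 or 3,
`δ(Y) = t(lca_N(Y))`. -/
def PhyloNetwork.Represents {X M : Type} [Fintype X] [DecidableEq X]
    (N : PhyloNetwork X) (t : N.V → M) (d : SymbolicDissim3 X M) : Prop :=
  ∀ Y : Finset X, Y.card = 2 ∨ Y.card = 3 → ∀ v : N.V, N.IsLca Y v → d.val Y = some (t v)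

/-- `δ` is level-1 representable. -/
def SymbolicDissim3.LevelOneRepresentable {X M : Type} [Fintype X] [DecidableEq X]
    (d : SymbolicDissim3 X M) : Prop :=
  ∃ (N : PhyloNetwork X) (t : N.V → M), N.IsLevelOne ∧ N.Represents t d

/-!
Reachability is a partial order on the vertices of a network, and `Y` has a lowest common
ancestor because the vertices above all of `Y` form a nonempty finite set. The level-1
condition enters through one fact: two vertices with a common descendant have a *least*
common descendant. Otherwise two incomparable vertices `v`, `w` would have two distinct
minimal common descendants `h`, `h'`, and paths from a lowest common ancestor of `v` and `w`
through `v` and `w` would close into two cycles through `v`, one with hybrid `h` and one with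
hybrid `h'`, which cannot have the same vertex set.

Uniqueness follows: two lowest common ancestors of `Y` both lie above their least common
descendant, which lies above `Y`, so both equal it. For the pair, suppose each pair of
elements of `Y` lies below a common child of the lca `v`. Three children `c`, `d`, `e` of `v`,
with `c` incomparable to `d` and to `e` but sharing a descendant with each, lie on the one
cycle rooted at `v`, which forces `d = e`; by induction on `Y`, a single child then lies above
all of `Y`, contradicting minimality of `v`.
-/

namespace PhyloNetwork

variable {X : Type} [Fintype X] [DecidableEq X] {N : PhyloNetwork X}

instance : Std.Irrefl (Relation.TransGen N.adj) := ⟨N.acyclic⟩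

lemma reaches_antisymm {a b : N.V} (hab : N.reaches a b) (hba : N.reaches b a) : a = b := by
  rcases Relation.reflTransGen_iff_eq_or_transGen.mp hab with h | h
  · exact h.symm
  rcases Relation.reflTransGen_iff_eq_or_transGen.mp hba with h' | h'
  · exact h'
  exact absurd (h.trans h') (N.acyclic a)

lemma ne_of_adj {a b : N.V} (h : N.adj a b) : a ≠ b := by
  rintro rfl
  exact N.acyclic a (.single h)

lemma transGen_of_reaches {a b : N.V} (h : N.reaches a b) (hne : a ≠ b) :
    Relation.TransGen N.adj a b :=
  (Relation.reflTransGen_iff_eq_or_transGen.mp h).resolve_left hne.symm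

lemma exists_adj_reaches_of_reaches {a b : N.V} (h : N.reaches a b) (hne : a ≠ b) :
    ∃ c, N.adj a c ∧ N.reaches c b :=
  Relation.TransGen.head'_iff.mp (transGen_of_reaches h hne)

lemma exists_minimal (S : Set N.V) (hS : S.Nonempty) :
    ∃ m ∈ S, ∀ x ∈ S, N.reaches x m → x = m := by
  have := N.instFin
  obtain ⟨m, hm, hmin⟩ :=
    (Finite.wellFounded_of_trans_of_irrefl (Relation.TransGen N.adj)).has_min S hS
  refine ⟨m, hm, fun x hx hxm => ?_⟩
  by_contra hne
  exact hmin x hx (transGen_of_reaches hxm hne)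

lemma exists_maximal (S : Set N.V) (hS : S.Nonempty) :
    ∃ m ∈ S, ∀ x ∈ S, N.reaches m x → x = m := by
  have := N.instFin
  obtain ⟨m, hm, hmax⟩ :=
    (Finite.wellFounded_of_trans_of_irrefl
      (Function.swap (Relation.TransGen N.adj))).has_min S hS
  refine ⟨m, hm, fun x hx hmx => ?_⟩
  by_contra hne
  exact hmax x hx (transGen_of_reaches hmx (Ne.symm hne))

def IsPath (N : PhyloNetwork X) (a : N.V) (l : List N.V) (b : N.V) : Prop :=
  (a :: (l ++ [b])).IsChain N.adj

lemma isPath_nil {a b : N.V} (h : N.adj a b) : N.IsPath a [] b :=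
  List.IsChain.cons_cons h (.singleton _)

lemma exists_isPath {a b : N.V} (h : Relation.TransGen N.adj a b) : ∃ l, N.IsPath a l b := by
  induction h using Relation.TransGen.head_induction_on with
  | single hab => exact ⟨[], isPath_nil hab⟩
  | head hac _ ih =>
    obtain ⟨l, hl⟩ := ih
    exact ⟨_ :: l, List.IsChain.cons_cons hac hl⟩

namespace IsPath

variable {a b c z : N.V} {l m : List N.V}

lemma append (h₁ : N.IsPath a l b) (h₂ : N.IsPath b m c) : N.IsPath a (l ++ b :: m) c := by
  unfold IsPath at *
  simpa using List.isChain_cons_split.mpr ⟨h₁, h₂⟩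

lemma pairwise (hp : N.IsPath a l b) : (a :: (l ++ [b])).Pairwise (Relation.TransGen N.adj) :=
  List.isChain_iff_pairwise.mp (hp.imp fun _ _ => Relation.TransGen.single)

lemma nodup (hp : N.IsPath a l b) : (a :: (l ++ [b])).Nodup := hp.pairwise.nodup

lemma transGen_of_mem_left (hp : N.IsPath a l b) (hz : z ∈ l ++ [b]) :
    Relation.TransGen N.adj a z :=
  (List.pairwise_cons.mp hp.pairwise).1 z hz

lemma transGen_of_mem_right (hp : N.IsPath a l b) (hz : z ∈ a :: l) :
    Relation.TransGen N.adj z b :=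
  (List.pairwise_append.mp (hp.pairwise : ((a :: l) ++ [b]).Pairwise _)).2.2 z hz b
    (List.mem_singleton_self b)

lemma ne (hp : N.IsPath a l b) : a ≠ b := by
  rintro rfl
  exact N.acyclic a (hp.transGen_of_mem_left (List.mem_append_right l (List.mem_singleton_self a)))

lemma reaches_of_mem (hp : N.IsPath a l b) (hz : z ∈ a :: (l ++ [b])) :
    N.reaches a z ∧ N.reaches z b := by
  rcases List.mem_cons.mp hz with rfl | hz
  · exact ⟨.refl, (hp.transGen_of_mem_right List.mem_cons_self).to_reflTransGen⟩
  refine ⟨(hp.transGen_of_mem_left hz).to_reflTransGen, ?_⟩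
  rcases List.mem_append.mp hz with hz | hz
  · exact (hp.transGen_of_mem_right (List.mem_cons_of_mem a hz)).to_reflTransGen
  · obtain rfl := List.mem_singleton.mp hz
    exact .refl

end IsPath

/-- The cycle has sides `r ⇝ v ⇝ h` and `r ⇝ w ⇝ h`, the first halves along `A` and `B`. -/
lemma NCycle.exists_of_paths {r v w h : N.V} {A B : List N.V} (hA : N.IsPath r A v)
    (hB : N.IsPath r B w) (hAB : ∀ z ∈ A ++ [v], z ∉ B ++ [w])
    (hvw : ¬ N.reaches v w) (hwv : ¬ N.reaches w v)
    (hvh : Relation.TransGen N.adj v h) (hwh : Relation.TransGen N.adj w h)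
    (hh : ∀ m, N.reaches v m → N.reaches w m → N.reaches m h → m = h) :
    ∃ C : NCycle N, v ∈ C.verts ∧ w ∈ C.verts ∧ h ∈ C.verts ∧
      ∀ z ∈ C.verts, N.reaches z h ∧
        (z ∈ r :: A ∨ z ∈ r :: B ∨ N.reaches v z ∨ N.reaches w z) := by
  obtain ⟨P, hP⟩ := exists_isPath hvh
  obtain ⟨Q, hQ⟩ := exists_isPath hwh
  have hside₁ := hA.append hP
  have hside₂ := hB.append hQ
  have hdisj : ∀ z ∈ A ++ v :: P, z ∉ B ++ w :: Q := by
    intro z hz₁ hz₂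
    rw [← List.singleton_append, ← List.append_assoc, List.mem_append] at hz₁ hz₂
    rcases hz₁ with hz₁ | hz₁ <;> rcases hz₂ with hz₂ | hz₂
    · exact hAB z hz₁ hz₂
    · exact hwv ((hQ.transGen_of_mem_left (by simp [hz₂])).to_reflTransGen.trans
        (hA.reaches_of_mem (List.mem_cons_of_mem r hz₁)).2)
    · exact hvw ((hP.transGen_of_mem_left (by simp [hz₁])).to_reflTransGen.trans
        (hB.reaches_of_mem (List.mem_cons_of_mem r hz₂)).2)
    · have hzh := hP.transGen_of_mem_right (List.mem_cons_of_mem v hz₁)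
      obtain rfl := hh z (hP.transGen_of_mem_left (by simp [hz₁])).to_reflTransGen
        (hQ.transGen_of_mem_left (by simp [hz₂])).to_reflTransGen hzh.to_reflTransGen
      exact N.acyclic z hzh
  refine ⟨⟨r, h, A ++ v :: P, B ++ w :: Q, hside₁, hside₂, hside₁.ne, hside₁.nodup,
    hside₂.nodup, hdisj, Or.inl (by simp)⟩, by simp [NCycle.verts], by simp [NCycle.verts],
    by simp [NCycle.verts], fun z hz => ?_⟩
  simp only [NCycle.verts, Set.mem_union, Set.mem_insert_iff, Set.mem_singleton_iff,
    Set.mem_ofPred_eq] at hz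
  rcases hz with ((rfl | rfl) | hz) | hz
  · exact ⟨(hside₁.reaches_of_mem List.mem_cons_self).2, Or.inl List.mem_cons_self⟩
  · exact ⟨.refl, Or.inr (Or.inr (Or.inl hvh.to_reflTransGen))⟩
  · refine ⟨(hside₁.reaches_of_mem (by simp at hz ⊢; tauto)).2, ?_⟩
    rcases List.mem_append.mp hz with hz | hz
    · exact Or.inl (List.mem_cons_of_mem r hz)
    · exact Or.inr (Or.inr (Or.inl (hP.reaches_of_mem (by simp at hz ⊢; tauto)).1))
  · refine ⟨(hside₂.reaches_of_mem (by simp at hz ⊢; tauto)).2, ?_⟩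
    rcases List.mem_append.mp hz with hz | hz
    · exact Or.inr (Or.inl (List.mem_cons_of_mem r hz))
    · exact Or.inr (Or.inr (Or.inr (hQ.reaches_of_mem (by simp at hz ⊢; tauto)).1))

theorem exists_least_common_descendant (hN : N.IsLevelOne) {v w u : N.V}
    (hvu : N.reaches v u) (hwu : N.reaches w u) :
    ∃ h, N.reaches v h ∧ N.reaches w h ∧
      ∀ z, N.reaches v z → N.reaches w z → N.reaches h z := by
  by_cases hvw : N.reaches v w
  · exact ⟨w, hvw, .refl, fun _ _ hwu => hwu⟩
  by_cases hwv : N.reaches w v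
  · exact ⟨v, .refl, hwv, fun _ hvu _ => hvu⟩
  obtain ⟨h, ⟨hvh, hwh⟩, hh⟩ :=
    exists_minimal {m | N.reaches v m ∧ N.reaches w m} ⟨u, hvu, hwu⟩
  refine ⟨h, hvh, hwh, fun z hvz hwz => ?_⟩
  by_contra hhz
  obtain ⟨h', ⟨⟨hvh', hwh'⟩, hh'z⟩, hh'⟩ :=
    exists_minimal {m | (N.reaches v m ∧ N.reaches w m) ∧ N.reaches m z}
      ⟨z, ⟨hvz, hwz⟩, .refl⟩
  obtain ⟨r, ⟨hrv, hrw⟩, hr⟩ :=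
    exists_maximal {m | N.reaches m v ∧ N.reaches m w} ⟨N.root, N.connected v, N.connected w⟩
  obtain ⟨A, hA⟩ := exists_isPath (transGen_of_reaches hrv (by rintro rfl; exact hvw hrw))
  obtain ⟨B, hB⟩ := exists_isPath (transGen_of_reaches hrw (by rintro rfl; exact hwv hrv))
  have hAB : ∀ z ∈ A ++ [v], z ∉ B ++ [w] := by
    intro z hzA hzB
    have hzv := hA.reaches_of_mem (List.mem_cons_of_mem r hzA)
    have hzw := hB.reaches_of_mem (List.mem_cons_of_mem r hzB)
    obtain rfl := hr z ⟨hzv.2, hzw.2⟩ hzv.1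
    exact N.acyclic z (hA.transGen_of_mem_left hzA)
  obtain ⟨C, hvC, -, -, hC⟩ := NCycle.exists_of_paths hA hB hAB hvw hwv
    (transGen_of_reaches hvh (by rintro rfl; exact hwv hwh))
    (transGen_of_reaches hwh (by rintro rfl; exact hvw hvh))
    (fun m hvm hwm hmh => hh m ⟨hvm, hwm⟩ hmh)
  obtain ⟨C', hvC', -, hh'C', -⟩ := NCycle.exists_of_paths hA hB hAB hvw hwv
    (transGen_of_reaches hvh' (by rintro rfl; exact hwv hwh'))
    (transGen_of_reaches hwh' (by rintro rfl; exact hvw hvh'))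
    (fun m hvm hwm hmh' => hh' m ⟨⟨hvm, hwm⟩, hmh'.trans hh'z⟩ hmh')
  rw [hN C' C v hvC' hvC] at hh'C'
  obtain rfl := hh h' ⟨hvh', hwh'⟩ (hC h' hh'C').1
  exact hhz hh'z

lemma reaches_of_incomparable_siblings (hN : N.IsLevelOne) {v c d e u u' : N.V}
    (hc : N.adj v c) (hd : N.adj v d) (he : N.adj v e)
    (hcd : ¬ N.reaches c d) (hdc : ¬ N.reaches d c) (hce : ¬ N.reaches c e)
    (hec : ¬ N.reaches e c) (hcu : N.reaches c u) (hdu : N.reaches d u)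
    (hcu' : N.reaches c u') (heu' : N.reaches e u') : N.reaches d e := by
  obtain ⟨h, hch, hdh, hh⟩ := exists_least_common_descendant hN hcu hdu
  obtain ⟨h', hch', heh', hh'⟩ := exists_least_common_descendant hN hcu' heu'
  obtain ⟨C, hcC, -, -, hC⟩ := NCycle.exists_of_paths (isPath_nil hc) (isPath_nil hd)
    (by simp only [List.nil_append, List.mem_singleton]; rintro z rfl rfl; exact hcd .refl)
    hcd hdc (transGen_of_reaches hch (by rintro rfl; exact hdc hdh))
    (transGen_of_reaches hdh (by rintro rfl; exact hcd hch))
    (fun m hcm hdm hmh => reaches_antisymm hmh (hh m hcm hdm))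
  obtain ⟨C', hcC', heC', -, -⟩ := NCycle.exists_of_paths (isPath_nil hc) (isPath_nil he)
    (by simp only [List.nil_append, List.mem_singleton]; rintro z rfl rfl; exact hce .refl)
    hce hec (transGen_of_reaches hch' (by rintro rfl; exact hec heh'))
    (transGen_of_reaches heh' (by rintro rfl; exact hce hch'))
    (fun m hcm hem hmh => reaches_antisymm hmh (hh' m hcm hem))
  rw [hN C' C c hcC' hcC] at heC'
  have hev : e ∉ [v] := by simpa using (ne_of_adj he).symm
  rcases (hC e heC').2 with hev' | hev' | hce' | hde
  · exact absurd hev' hev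
  · exact absurd hev' hev
  · exact absurd hce' hce
  · exact hde

lemma eq_of_incomparable_siblings (hN : N.IsLevelOne) {v c d e u u' : N.V}
    (hc : N.adj v c) (hd : N.adj v d) (he : N.adj v e)
    (hcd : ¬ N.reaches c d) (hdc : ¬ N.reaches d c) (hce : ¬ N.reaches c e)
    (hec : ¬ N.reaches e c) (hcu : N.reaches c u) (hdu : N.reaches d u)
    (hcu' : N.reaches c u') (heu' : N.reaches e u') : d = e :=
  reaches_antisymm
    (reaches_of_incomparable_siblings hN hc hd he hcd hdc hce hec hcu hdu hcu' heu')
    (reaches_of_incomparable_siblings hN hc he hd hce hec hcd hdc hcu' heu' hcu hdu)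

lemma exists_child_covering_insert (hN : N.IsLevelOne) {v c : N.V} {S : Finset X} {t : X}
    (hc : N.adj v c) (hcS : ∀ s ∈ S, s ∈ N.F c) (hS : S.Nonempty)
    (hpair : ∀ s ∈ S, ∃ d, N.adj v d ∧ s ∈ N.F d ∧ t ∈ N.F d) :
    ∃ d, N.adj v d ∧ (∀ s ∈ S, s ∈ N.F d) ∧ t ∈ N.F d := by
  by_contra! hno
  have hinc : ∀ d, N.adj v d → t ∈ N.F d → ¬ N.reaches c d ∧ ¬ N.reaches d c :=
    fun d hd hdt => ⟨fun hcd => hno c hc hcS (hcd.trans hdt),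
      fun hdc => hno d hd (fun s hs => hdc.trans (hcS s hs)) hdt⟩
  obtain ⟨s₀, hs₀⟩ := hS
  obtain ⟨d, hd, hds₀, hdt⟩ := hpair s₀ hs₀
  refine hno d hd (fun s hs => ?_) hdt
  obtain ⟨e, he, hes, het⟩ := hpair s hs
  have hde : d = e := eq_of_incomparable_siblings hN hc hd he (hinc d hd hdt).1
    (hinc d hd hdt).2 (hinc e he het).1 (hinc e he het).2 (hcS s₀ hs₀) hds₀ (hcS s hs) hes
  exact hde ▸ hes

lemma exists_child_covering (hN : N.IsLevelOne) {v : N.V} {Y : Finset X} (hY : Y.Nonempty)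
    (hpair : ∀ x ∈ Y, ∀ y ∈ Y, ∃ c, N.adj v c ∧ x ∈ N.F c ∧ y ∈ N.F c) :
    ∃ c, N.adj v c ∧ ∀ x ∈ Y, x ∈ N.F c := by
  induction hY using Finset.Nonempty.cons_induction with
  | singleton a =>
    have ha := Finset.mem_singleton_self a
    obtain ⟨c, hc, hac, -⟩ := hpair a ha a ha
    exact ⟨c, hc, by simpa using hac⟩
  | cons t S htS hS ih =>
    obtain ⟨c, hc, hcS⟩ := ih fun x hx y hy =>
      hpair x (Finset.mem_cons_of_mem hx) y (Finset.mem_cons_of_mem hy)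
    obtain ⟨d, hd, hdS, hdt⟩ := exists_child_covering_insert hN hc hcS hS fun s hs =>
      hpair s (Finset.mem_cons_of_mem hs) t (Finset.mem_cons_self t S)
    exact ⟨d, hd, by simpa [hdt] using hdS⟩

lemma F_leaf (x : X) : N.F (N.leaf x) = {x} := by
  ext y
  refine ⟨fun hy => ?_, fun hy => hy ▸ .refl⟩
  by_contra hne
  obtain ⟨c, hc, -⟩ := exists_adj_reaches_of_reaches hy (fun h => hne (N.leaf_inj h).symm)
  exact N.leaf_no_out x c hc

lemma exists_adj_mem_F {v : N.V} {x : X} (hv : ¬ N.IsLeafV v) (hx : x ∈ N.F v) :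
    ∃ c, N.adj v c ∧ x ∈ N.F c :=
  exists_adj_reaches_of_reaches hx fun h => hv ⟨x, h.symm⟩

lemma exists_isLca (Y : Finset X) : ∃ v, N.IsLca Y v := by
  obtain ⟨v, hv, hmax⟩ :=
    exists_maximal {m | ∀ x ∈ Y, x ∈ N.F m} ⟨N.root, fun x _ => N.connected _⟩
  exact ⟨v, hv, fun c hc hcY => ne_of_adj hc (hmax c hcY (.single hc)).symm⟩

namespace IsLca

variable {Y : Finset X} {v : N.V}

lemma not_isLeafV (hv : N.IsLca Y v) {x y : X} (hx : x ∈ Y) (hy : y ∈ Y) (hxy : x ≠ y) :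
    ¬ N.IsLeafV v := by
  rintro ⟨z, rfl⟩
  have hxz := hv.1 x hx
  have hyz := hv.1 y hy
  rw [F_leaf, Set.mem_singleton_iff] at hxz hyz
  exact hxy (hxz.trans hyz.symm)

lemma eq_of_reaches (hv : N.IsLca Y v) {h : N.V} (hvh : N.reaches v h)
    (hh : ∀ x ∈ Y, x ∈ N.F h) : v = h := by
  by_contra hne
  obtain ⟨c, hc, hch⟩ := exists_adj_reaches_of_reaches hvh hne
  exact hv.2 c hc fun x hx => hch.trans (hh x hx)

lemma eq (hN : N.IsLevelOne) (hY : Y.Nonempty) {w : N.V} (hv : N.IsLca Y v)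
    (hw : N.IsLca Y w) : v = w := by
  obtain ⟨x, hx⟩ := hY
  obtain ⟨h, hvh, hwh, hh⟩ := exists_least_common_descendant hN (hv.1 x hx) (hw.1 x hx)
  have hYh : ∀ y ∈ Y, y ∈ N.F h := fun y hy => hh _ (hv.1 y hy) (hw.1 y hy)
  rw [hv.eq_of_reaches hvh hYh, hw.eq_of_reaches hwh hYh]

lemma exists_pair (hN : N.IsLevelOne) (hY : Y.Nonempty) (hv : N.IsLca Y v)
    (hvl : ¬ N.IsLeafV v) : ∃ x ∈ Y, ∃ y ∈ Y, x ≠ y ∧ N.IsLca {x, y} v := by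
  by_contra! hno
  have hpair : ∀ x ∈ Y, ∀ y ∈ Y, ∃ c, N.adj v c ∧ x ∈ N.F c ∧ y ∈ N.F c := by
    intro x hx y hy
    by_cases hxy : x = y
    · subst hxy
      obtain ⟨c, hc, hxc⟩ := exists_adj_mem_F hvl (hv.1 x hx)
      exact ⟨c, hc, hxc, hxc⟩
    have hxyv : ∀ z ∈ ({x, y} : Finset X), z ∈ N.F v := by simp [hv.1 x hx, hv.1 y hy]
    obtain ⟨c, hc, hcxy⟩ : ∃ c, N.adj v c ∧ ∀ z ∈ ({x, y} : Finset X), z ∈ N.F c := by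
      simpa [IsLca, hxyv] using hno x hx y hy hxy
    exact ⟨c, hc, hcxy x (by simp), hcxy y (by simp)⟩
  obtain ⟨c, hc, hcY⟩ := exists_child_covering hN hY hpair
  exact hv.2 c hc hcY

end IsLca

end PhyloNetwork

open PhyloNetwork in
/-- In a level-1 network `N` on `X`, every `Y ⊆ X` with `|Y| ≥ 2` has a unique
lowest common ancestor `v` (an interior vertex with `Y ⊆ F(v)` but `Y ⊄ F(v')`
for every child `v'` of `v`); moreover `v = lca(x,y)` for two distinct `x,y ∈ Y`. -/
theorem lca_exists_unique {X : Type} [Fintype X] [DecidableEq X]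
    (N : PhyloNetwork X) (hN : N.IsLevelOne) (Y : Finset X) (hY : 2 ≤ Y.card) :
    ∃ v : N.V, (¬ N.IsLeafV v ∧ N.IsLca Y v) ∧
      (∀ w : N.V, (¬ N.IsLeafV w ∧ N.IsLca Y w) → w = v) ∧
      ∃ x ∈ Y, ∃ y ∈ Y, x ≠ y ∧ N.IsLca {x, y} v := by
  obtain ⟨x, hx, y, hy, hxy⟩ := Finset.one_lt_card.mp hY
  have hYne : Y.Nonempty := ⟨x, hx⟩
  obtain ⟨v, hv⟩ := N.exists_isLca Y
  have hvl := hv.not_isLeafV hx hy hxy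
  exact ⟨v, ⟨hvl, hv⟩, fun w hw => hw.2.eq hN hYne hv, hv.exists_pair hN hYne hvl⟩
end

section
/- Let N be a level-1 phylogenetic network on X with cycles C_1, ..., C_k (k ≥ 1). Then the collection {R(C_1), ..., R(C_k)} of root offspring sets of the cycles forms a hierarchy on X, i.e., for any two sets A, B in the collection, A ∩ B ∈ {A, B, ∅}. -/
/-!
If the roots `r`, `r'` of two cycles are incomparable but have a common descendant `z`, take a
path `root → r → z` and a path `root → r' → z`; the second avoids `r`. Between the last vertex
`a` before `r` and the first vertex `b` after `r` that the first path shares with the second,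
the two paths form a cycle `D` carrying `r` strictly below its root. By level-1, `D` and the cycle
rooted at `r` have the same vertices, so `r` reaches `D.r`, which reaches `r` by a nonempty
path: a directed cycle. Hence the sets `R(C)` are nested when the roots are comparable and
disjoint otherwise.
-/

open Relation

namespace List

variable {α : Type*} {R : α → α → Prop}

theorem exists_eq_append_cons_first (p : α → Prop) {l : List α} (h : ∃ x ∈ l, p x) :
    ∃ l₁ x l₂, l = l₁ ++ x :: l₂ ∧ p x ∧ ∀ y ∈ l₁, ¬ p y := by
  classical
  obtain ⟨x, hx⟩ := Option.isSome_iff_exists.1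
    (find?_isSome.2 (by simpa using h) : (l.find? (p ·)).isSome)
  obtain ⟨hpx, l₁, l₂, rfl, hl₁⟩ := find?_eq_some_iff_append.1 hx
  exact ⟨l₁, x, l₂, rfl, by simpa using hpx, fun y hy => by simpa using hl₁ y hy⟩

theorem exists_eq_append_cons_last (p : α → Prop) {l : List α} (h : ∃ x ∈ l, p x) :
    ∃ l₁ x l₂, l = l₁ ++ x :: l₂ ∧ p x ∧ ∀ y ∈ l₂, ¬ p y := by
  obtain ⟨l₁, x, l₂, hl, hpx, hl₁⟩ := exists_eq_append_cons_first p (l := l.reverse) (by simpa)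
  refine ⟨l₂.reverse, x, l₁.reverse, ?_, hpx, fun y hy => hl₁ y (mem_reverse.1 hy)⟩
  simpa using congrArg reverse hl

theorem IsChain.transGen_of_mem {l : List α} {a b : α} (h : (a :: l).IsChain R) (hb : b ∈ l) :
    TransGen R a b :=
  (h.imp fun _ _ => TransGen.single).rel_cons hb

theorem IsChain.pairwise_transGen {l : List α} (h : l.IsChain R) : l.Pairwise (TransGen R) :=
  isChain_iff_pairwise.1 (h.imp fun _ _ => TransGen.single)

theorem IsChain.nodup_of_acyclic (hR : ∀ v, ¬ TransGen R v v) {l : List α} (h : l.IsChain R) :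
    l.Nodup := by
  refine h.pairwise_transGen.imp ?_
  rintro x _ hxy rfl
  exact hR x hxy

theorem exists_disjoint_chains_through (hR : ∀ v, ¬ TransGen R v v) {A B L : List α} {u : α}
    (hAB : (A ++ u :: B).IsChain R) (hL : L.IsChain R) (hu : u ∉ L)
    (hA : ∃ x ∈ A, x ∈ L) (hB : ∃ y ∈ B, y ∈ L) :
    ∃ a b s₁ s₂, (a :: (s₁ ++ [b])).IsChain R ∧ (a :: (s₂ ++ [b])).IsChain R ∧ u ∈ s₁ ∧
      ∀ v ∈ s₁, v ∉ s₂ := by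
  obtain ⟨A₁, a, A₂, rfl, haL, hA₂⟩ := exists_eq_append_cons_last (· ∈ L) hA
  obtain ⟨B₁, b, B₂, rfl, hbL, hB₁⟩ := exists_eq_append_cons_first (· ∈ L) hB
  have h₁ : (a :: (A₂ ++ u :: B₁ ++ [b])).IsChain R := hAB.infix ⟨A₁, B₂, by simp⟩
  have hab : TransGen R a b := h₁.transGen_of_mem (by simp)
  obtain ⟨U, W, rfl⟩ := append_of_mem haL
  have hbW : b ∈ W := by
    have hpw := pairwise_append.1 hL.pairwise_transGen
    simp only [mem_append, mem_cons] at hbL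
    rcases hbL with hbU | rfl | hbW
    · exact absurd (hpw.2.2 b hbU a mem_cons_self) fun hba => hR a (hab.trans hba)
    · exact absurd hab (hR b)
    · exact hbW
  obtain ⟨W₁, W₂, rfl⟩ := append_of_mem hbW
  refine ⟨a, b, A₂ ++ u :: B₁, W₁, h₁, hL.infix ⟨U, W₂, by simp⟩, by simp, ?_⟩
  intro v hv hvW
  have hvL : v ∈ U ++ a :: (W₁ ++ b :: W₂) := by simp [hvW]
  simp only [mem_append, mem_cons] at hv
  rcases hv with hv | rfl | hv
  · exact hA₂ v hv hvL
  · exact hu hvL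
  · exact hB₁ v hv hvL

end List

theorem Relation.ReflTransGen.exists_isChain_through {α : Type*} {R : α → α → Prop} {a u b : α}
    (h₁ : ReflTransGen R a u) (h₂ : ReflTransGen R u b) :
    ∃ A B, (A ++ u :: B).IsChain R ∧ a ∈ A ++ [u] ∧ b ∈ u :: B ∧
      (∀ v ∈ A, ReflTransGen R v u) ∧ ∀ v ∈ B, ReflTransGen R u v := by
  obtain ⟨A, hA, hAa⟩ := List.exists_isChain_cons_of_relationReflTransGen (reflTransGen_swap.2 h₁)
  obtain ⟨B, hB, hBb⟩ := List.exists_isChain_cons_of_relationReflTransGen h₂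
  have hA' : (A.reverse ++ [u]).IsChain R := by
    simpa using List.isChain_reverse.2 hA
  refine ⟨A.reverse, B, by simpa using hA'.append_overlap hB (by simp), ?_, ?_, ?_, ?_⟩
  · have ha := List.getLast_mem (List.cons_ne_nil u A)
    rw [hAa] at ha
    simpa [or_comm] using ha
  · exact hBb ▸ List.getLast_mem _
  · intro v hv
    exact reflTransGen_swap.1
      ((hA.imp fun _ _ => ReflTransGen.single).rel_cons (List.mem_reverse.1 hv))
  · exact fun v hv => (hB.imp fun _ _ => ReflTransGen.single).rel_cons hv

namespace PhyloNetwork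

variable {X : Type} [Fintype X] [DecidableEq X] {N : PhyloNetwork X}

theorem F_subset_of_reaches {u v : N.V} (h : N.reaches u v) : N.F v ⊆ N.F u :=
  fun _ hx => h.trans hx

namespace NCycle

def ofChains {a b : N.V} {s₁ s₂ : List N.V} (h₁ : (a :: (s₁ ++ [b])).IsChain N.adj)
    (h₂ : (a :: (s₂ ++ [b])).IsChain N.adj) (hdisj : ∀ v ∈ s₁, v ∉ s₂) (hs₁ : s₁ ≠ []) :
    NCycle N where
  r := a
  h := b
  side1 := s₁
  side2 := s₂
  chain1 := h₁
  chain2 := h₂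
  ne hab := N.acyclic a (hab ▸ h₁.transGen_of_mem (by simp))
  nodup1 := h₁.nodup_of_acyclic N.acyclic
  nodup2 := h₂.nodup_of_acyclic N.acyclic
  disj := hdisj
  nontriv := Or.inl hs₁

theorem r_mem_verts (C : NCycle N) : C.r ∈ C.verts := by
  simp [verts]

theorem mem_verts_of_mem_side1 (C : NCycle N) {v : N.V} (hv : v ∈ C.side1) : v ∈ C.verts := by
  simp [verts, hv]

theorem reaches_of_mem_verts (C : NCycle N) {v : N.V} (hv : v ∈ C.verts) : N.reaches C.r v := by
  simp only [verts, Set.mem_union, Set.mem_insert_iff, Set.mem_singleton_iff,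
    Set.mem_ofPred_eq] at hv
  rcases hv with ((rfl | rfl) | hv) | hv
  · exact ReflTransGen.refl
  · exact (C.chain1.transGen_of_mem (by simp)).to_reflTransGen
  · exact (C.chain1.transGen_of_mem (by simp [hv])).to_reflTransGen
  · exact (C.chain2.transGen_of_mem (by simp [hv])).to_reflTransGen

end NCycle

theorem exists_ncycle_mem_side1_of_not_reaches {u u' z : N.V} (huu' : ¬ N.reaches u u')
    (hu'u : ¬ N.reaches u' u) (hz : N.reaches u z) (hz' : N.reaches u' z) :
    ∃ D : NCycle N, u ∈ D.side1 := by
  obtain ⟨A, B, hAB, hrA, hzB, -, -⟩ := (N.connected u).exists_isChain_through hz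
  obtain ⟨A', B', hL, hrL, hzL, hA', hB'⟩ := (N.connected u').exists_isChain_through hz'
  have huL : u ∉ A' ++ u' :: B' := by
    simp only [List.mem_append, List.mem_cons, not_or]
    exact ⟨fun hu => huu' (hA' u hu), fun hu => huu' (hu ▸ ReflTransGen.refl),
      fun hu => hu'u (hB' u hu)⟩
  have hrL' : N.root ∈ A' ++ u' :: B' := by
    simp only [List.mem_append, List.mem_cons] at hrL ⊢
    tauto
  have hzL' : z ∈ A' ++ u' :: B' := List.mem_append_right A' hzL
  have hrA' : N.root ∈ A := by
    rcases List.mem_append.1 hrA with h | h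
    · exact h
    · exact absurd (List.eq_of_mem_singleton h ▸ hrL') huL
  have hzB' : z ∈ B := by
    rcases List.mem_cons.1 hzB with h | h
    · exact absurd (h ▸ hzL') huL
    · exact h
  obtain ⟨a, b, s₁, s₂, h₁, h₂, hus, hdisj⟩ :=
    List.exists_disjoint_chains_through N.acyclic hAB hL huL ⟨_, hrA', hrL'⟩ ⟨_, hzB', hzL'⟩
  exact ⟨NCycle.ofChains h₁ h₂ hdisj (List.ne_nil_of_mem hus), hus⟩

theorem IsLevelOne.r_not_mem_side1 (hN : N.IsLevelOne) (C D : NCycle N) : C.r ∉ D.side1 := by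
  intro h
  have hverts : C.verts = D.verts :=
    hN C D C.r C.r_mem_verts (D.mem_verts_of_mem_side1 h)
  have hCD : N.reaches C.r D.r := C.reaches_of_mem_verts (hverts ▸ D.r_mem_verts)
  exact N.acyclic _ ((D.chain1.transGen_of_mem (by simp [h])).trans_left hCD)

end PhyloNetwork

open PhyloNetwork in
/-- In a level-1 network, the root offspring sets `R(C)` of the cycles form a
hierarchy on `X`: any two of them are nested or disjoint. -/
theorem cycle_root_offspring_hierarchy {X : Type} [Fintype X] [DecidableEq X]
    (N : PhyloNetwork X) (hN : N.IsLevelOne) :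
    ∀ C C' : NCycle N,
      C.RC ∩ C'.RC = C.RC ∨ C.RC ∩ C'.RC = C'.RC ∨ C.RC ∩ C'.RC = ∅ := by
  intro C C'
  by_cases h : N.reaches C'.r C.r
  · exact Or.inl (Set.inter_eq_left.2 (F_subset_of_reaches h))
  by_cases h' : N.reaches C.r C'.r
  · exact Or.inr (Or.inl (Set.inter_eq_right.2 (F_subset_of_reaches h')))
  refine Or.inr (Or.inr (Set.eq_empty_of_forall_notMem fun x ⟨hx, hx'⟩ => ?_))
  obtain ⟨D, hD⟩ := exists_ncycle_mem_side1_of_not_reaches h' h hx hx'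
  exact hN.r_not_mem_side1 C D hD
end
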